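/- Let (p_k) be nonnegative reals summing to 1, let (e_k) and (f_k) be orthonormal families in finite-dimensional complex inner product spaces H_A and H_B respectively, and set ψ = Σ_k √p_k (e_k ⊗ f_k). Then max over unit product vectors a ⊗ b of |⟨a ⊗ b, ψ⟩|² equals max_k p_k. -/

import Mathlib

open Finset in
lemma schmidt_overlap {dA dB m : ℕ} (e : Fin m → Fin dA → ℂ) (f : Fin m → Fin dB → ℂ)
    (c : Fin m → ℂ) (a : Fin dA → ℂ) (b : Fin dB → ℂ) :
    ∑ i, ∑ j, (starRingEnd ℂ) (a i * b j) * (∑ k, c k * e k i * f k j)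
      = ∑ k, c k * (dotProduct (star a) (e k)) * (dotProduct (star b) (f k)) := by
  have hR : ∀ k, c k * (dotProduct (star a) (e k)) * (dotProduct (star b) (f k))
      = ∑ i, ∑ j, (starRingEnd ℂ) (a i * b j) * (c k * e k i * f k j) := by
    intro k
    simp only [dotProduct, Pi.star_apply, Finset.mul_sum, Finset.sum_mul, map_mul]
    rw [Finset.sum_comm]
    refine Finset.sum_congr rfl fun i _ => Finset.sum_congr rfl fun j _ => by
      simp only [RCLike.star_def]; ring
  rw [Finset.sum_congr rfl fun k _ => hR k]
  simp only [Finset.mul_sum]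
  have hswap : ∀ i : Fin dA, (∑ j : Fin dB, ∑ k : Fin m,
      (starRingEnd ℂ) (a i * b j) * (c k * e k i * f k j))
      = ∑ k : Fin m, ∑ j : Fin dB,
      (starRingEnd ℂ) (a i * b j) * (c k * e k i * f k j) := fun i => Finset.sum_comm
  simp only [hswap]
  exact Finset.sum_comm

lemma inner_piLp_equiv_symm_aux {d : ℕ} (x y : Fin d → ℂ) :
    inner ℂ ((WithLp.equiv 2 _).symm x : EuclideanSpace ℂ (Fin d)) ((WithLp.equiv 2 _).symm y)
      = dotProduct (star x) y := by
  rw [WithLp.equiv_symm_apply, EuclideanSpace.inner_toLp_toLp, dotProduct_comm]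

lemma bessel_aux {d m : ℕ} (e : Fin m → Fin d → ℂ)
    (he : ∀ j k, dotProduct (star (e j)) (e k) = if j = k then 1 else 0)
    (a : Fin d → ℂ) (ha : dotProduct (star a) a = 1) :
    ∑ k, ‖dotProduct (star a) (e k)‖ ^ 2 ≤ 1 := by
  set a' : EuclideanSpace ℂ (Fin d) := (WithLp.equiv 2 _).symm a with ha'
  set e' : Fin m → EuclideanSpace ℂ (Fin d) := fun k => (WithLp.equiv 2 _).symm (e k) with he'
  have horth : Orthonormal ℂ e' := by
    rw [orthonormal_iff_ite]
    intro j k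
    rw [he', inner_piLp_equiv_symm_aux, he j k]
  have hb := horth.sum_inner_products_le (s := Finset.univ) a'
  have hnorm : ‖a'‖ ^ 2 = 1 := by
    have h1 := inner_self_eq_norm_sq (𝕜 := ℂ) a'
    rw [ha', inner_piLp_equiv_symm_aux, ha] at h1
    rw [ha']
    simpa using h1.symm
  calc ∑ k, ‖dotProduct (star a) (e k)‖ ^ 2
      = ∑ k, ‖(inner ℂ (e' k) a' : ℂ)‖ ^ 2 := by
        refine Finset.sum_congr rfl fun k _ => ?_
        simp only [he', ha']
        rw [inner_piLp_equiv_symm_aux]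
        have : dotProduct (star (e k)) a
            = (starRingEnd ℂ) (dotProduct (star a) (e k)) := by
          simp [dotProduct, map_sum, map_mul, mul_comm]
        rw [this, Complex.norm_conj]
    _ ≤ ‖a'‖ ^ 2 := hb
    _ = 1 := hnorm

/-- For a state `ψ = Σ_k √p_k e_k ⊗ f_k` in Schmidt form, the maximal squared overlap with
unit product vectors `a ⊗ b` equals `max_k p_k`. -/
theorem stmt5 (dA dB m : ℕ) [NeZero m] (p : Fin m → ℝ)
    (hp : ∀ k, 0 ≤ p k) (hp1 : ∑ k, p k = 1)
    (e : Fin m → Fin dA → ℂ) (f : Fin m → Fin dB → ℂ)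
    (he : ∀ j k, dotProduct (star (e j)) (e k) = if j = k then 1 else 0)
    (hf : ∀ j k, dotProduct (star (f j)) (f k) = if j = k then 1 else 0) :
    IsGreatest {x : ℝ | ∃ (a : Fin dA → ℂ) (b : Fin dB → ℂ),
        dotProduct (star a) a = 1 ∧ dotProduct (star b) b = 1 ∧
        x = ‖(∑ i, ∑ j, (starRingEnd ℂ) (a i * b j) *
          (∑ k, (Real.sqrt (p k) : ℂ) * e k i * f k j))‖ ^ 2}
      (Finset.univ.sup' Finset.univ_nonempty p) := by
  obtain ⟨k₀, -, hk₀⟩ := Finset.exists_mem_eq_sup' (Finset.univ_nonempty (α := Fin m)) p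
  constructor
  · -- membership : achieved by a = e k₀, b = f k₀
    refine ⟨e k₀, f k₀, by simpa using he k₀ k₀, by simpa using hf k₀ k₀, ?_⟩
    rw [schmidt_overlap]
    have : ∑ k, ((Real.sqrt (p k) : ℂ)) * (dotProduct (star (e k₀)) (e k))
        * (dotProduct (star (f k₀)) (f k)) = (Real.sqrt (p k₀) : ℂ) := by
      rw [Finset.sum_eq_single k₀]
      · simp [he k₀ k₀, hf k₀ k₀]
      · intro k _ hk
        rw [he k₀ k, hf k₀ k]
        simp [Ne.symm hk]
      · simp
    rw [this, hk₀]
    rw [Complex.norm_of_nonneg (Real.sqrt_nonneg _), Real.sq_sqrt (hp k₀)]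
  · -- upper bound
    rintro x ⟨a, b, ha, hb, rfl⟩
    rw [schmidt_overlap]
    set α : Fin m → ℝ := fun k => ‖dotProduct (star a) (e k)‖ with hα
    set β : Fin m → ℝ := fun k => ‖dotProduct (star b) (f k)‖ with hβ
    have h1 : ‖(∑ k, ((Real.sqrt (p k) : ℂ)) * (dotProduct (star a) (e k))
        * (dotProduct (star b) (f k)))‖ ≤ ∑ k, Real.sqrt (p k) * α k * β k := by
      refine (norm_sum_le _ _).trans_eq ?_
      refine Finset.sum_congr rfl fun k _ => ?_
      rw [norm_mul, norm_mul, Complex.norm_of_nonneg (Real.sqrt_nonneg _)]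
    have hαβ : ∀ k, 0 ≤ Real.sqrt (p k) * α k * β k := fun k => by
      positivity
    have h2 : (∑ k, Real.sqrt (p k) * α k * β k) ^ 2
        ≤ (∑ k, (Real.sqrt (p k) * α k) ^ 2) * (∑ k, β k ^ 2) := by
      have := Finset.sum_mul_sq_le_sq_mul_sq Finset.univ (fun k => Real.sqrt (p k) * α k) β
      simpa [mul_assoc] using this
    have h3 : ∑ k, (Real.sqrt (p k) * α k) ^ 2 ≤ Finset.univ.sup' Finset.univ_nonempty p := by
      have hA : ∀ k, (Real.sqrt (p k) * α k) ^ 2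
          ≤ (Finset.univ.sup' Finset.univ_nonempty p) * α k ^ 2 := by
        intro k
        rw [mul_pow, Real.sq_sqrt (hp k)]
        exact mul_le_mul_of_nonneg_right
          (Finset.le_sup' p (Finset.mem_univ k)) (sq_nonneg _)
      calc ∑ k, (Real.sqrt (p k) * α k) ^ 2
          ≤ ∑ k, (Finset.univ.sup' Finset.univ_nonempty p) * α k ^ 2 :=
            Finset.sum_le_sum fun k _ => hA k
        _ = (Finset.univ.sup' Finset.univ_nonempty p) * ∑ k, α k ^ 2 := by
            rw [Finset.mul_sum]
        _ ≤ (Finset.univ.sup' Finset.univ_nonempty p) * 1 := by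
            refine mul_le_mul_of_nonneg_left ?_ ?_
            · exact bessel_aux e he a ha
            · exact le_trans (hp k₀) (Finset.le_sup' p (Finset.mem_univ k₀))
        _ = _ := mul_one _
    have h4 : ∑ k, β k ^ 2 ≤ 1 := bessel_aux f hf b hb
    have hpsup : 0 ≤ Finset.univ.sup' Finset.univ_nonempty p :=
      le_trans (hp k₀) (Finset.le_sup' p (Finset.mem_univ k₀))
    calc ‖(∑ k, ((Real.sqrt (p k) : ℂ)) * (dotProduct (star a) (e k))
          * (dotProduct (star b) (f k)))‖ ^ 2
        ≤ (∑ k, Real.sqrt (p k) * α k * β k) ^ 2 := by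
          exact pow_le_pow_left₀ (norm_nonneg _) h1 2
      _ ≤ (∑ k, (Real.sqrt (p k) * α k) ^ 2) * (∑ k, β k ^ 2) := h2
      _ ≤ (Finset.univ.sup' Finset.univ_nonempty p) * 1 := by
          refine mul_le_mul h3 h4 ?_ hpsup
          exact Finset.sum_nonneg fun k _ => sq_nonneg _
      _ = _ := mul_one _
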